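/- Let λ_n > 0 be a sequence tending to infinity, (e_n) an orthonormal system in L²(Γ), and g smooth so that Σ λ_n^k |g_n|² < ∞ for all k, where g_n = ⟨e_n, g⟩. Define J_D^h[g] = −Σ √λ_n g_n e_n / tanh(√λ_n h) and J_D^∞[g] = −Σ √λ_n g_n e_n. Then J_D^h[g] → J_D^∞[g] in L²(Γ) as h → ∞, and ‖J_D^h[g] − J_D^H[g]‖ = O(|h − H|) uniformly for h, H in compact subsets of (0,∞). -/

import Mathlib

open Real Filter

/-! Both statements reduce, coefficient by coefficient, to elementary bounds on
`coth = tanh⁻¹`: `0 ≤ coth x - 1 ≤ 1 / x` and `|coth x - coth y| ≤ |x - y| / m²` for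
`x, y ≥ m > 0` (mean value theorem, `coth' = -1 / sinh²` and `sinh t ≥ t`). Scaled by `√λ_n`,
these bound the `n`-th coefficient of `J_D^∞[g] - J_D^h[g]` by `|g_n| / h`, and that of
`J_D^h[g] - J_D^H[g]` by `|h - H| |g_n| / a²`. By Parseval both differences are then at most
a constant times `‖g‖ = √(Σ g_n²)`. -/

namespace Real

lemma one_le_inv_tanh {x : ℝ} (hx : 0 < x) : 1 ≤ (tanh x)⁻¹ := by
  rw [tanh_eq_sinh_div_cosh, inv_div]
  exact (one_le_div (sinh_pos_iff.2 hx)).2 (sinh_lt_cosh x).le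

lemma inv_tanh_sub_one_le_inv {x : ℝ} (hx : 0 < x) : (tanh x)⁻¹ - 1 ≤ x⁻¹ := by
  have hsinh := sinh_pos_iff.2 hx
  rw [tanh_eq_sinh_div_cosh, inv_div, div_sub_one hsinh.ne', cosh_sub_sinh,
    div_le_iff₀ hsinh, inv_mul_eq_div, le_div_iff₀ hx, sinh_eq]
  -- this is `2x + 1 ≤ exp (2x)`, multiplied by `exp (-x) / 2`
  have hexp : exp x = exp (2 * x) * exp (-x) := by rw [← exp_add]; ring_nf
  nlinarith [add_one_le_exp (2 * x), exp_pos (-x)]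

lemma hasDerivAt_inv_tanh {x : ℝ} (hx : x ≠ 0) :
    HasDerivAt (fun t => (tanh t)⁻¹) (-(sinh x ^ 2)⁻¹) x := by
  have hsinh : sinh x ≠ 0 := sinh_ne_zero.2 hx
  simp_rw [tanh_eq_sinh_div_cosh, inv_div]
  refine ((hasDerivAt_cosh x).div (hasDerivAt_sinh x) hsinh).congr_deriv ?_
  field_simp
  linear_combination -cosh_sq_sub_sinh_sq x

lemma abs_inv_tanh_sub_inv_tanh_le {m x y : ℝ} (hm : 0 < m) (hx : m ≤ x) (hy : m ≤ y) :
    |(tanh x)⁻¹ - (tanh y)⁻¹| ≤ |x - y| / m ^ 2 := by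
  have hderiv : ∀ t ∈ Set.Ici m,
      HasDerivWithinAt (fun t => (tanh t)⁻¹) (-(sinh t ^ 2)⁻¹) (Set.Ici m) t :=
    fun t ht => (hasDerivAt_inv_tanh (hm.trans_le ht).ne').hasDerivWithinAt
  have hbound : ∀ t ∈ Set.Ici m, ‖-(sinh t ^ 2)⁻¹‖ ≤ (m ^ 2)⁻¹ := fun t (ht : m ≤ t) => by
    have hmt : m < sinh t := ht.trans_lt (self_lt_sinh_iff.2 (hm.trans_le ht))
    rw [norm_neg, norm_inv, norm_pow, norm_of_nonneg (hm.trans hmt).le]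
    gcongr
  have := (convex_Ici m).norm_image_sub_le_of_norm_hasDerivWithin_le hderiv hbound hy hx
  simpa only [norm_eq_abs, div_eq_inv_mul] using this

lemma abs_sub_div_tanh_le {s x : ℝ} (hs : 0 < s) (hx : 0 < x) (y : ℝ) :
    |s * y - s * y / tanh (s * x)| ≤ x⁻¹ * |y| := by
  have hsx : 0 < s * x := mul_pos hs hx
  calc |s * y - s * y / tanh (s * x)| = s * |y| * ((tanh (s * x))⁻¹ - 1) := by
        rw [← abs_neg, show -(s * y - s * y / tanh (s * x)) = s * y * ((tanh (s * x))⁻¹ - 1) by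
          ring, abs_mul, abs_mul, abs_of_pos hs,
          abs_of_nonneg (sub_nonneg.2 (one_le_inv_tanh hsx))]
    _ ≤ s * |y| * (s * x)⁻¹ := by gcongr; exact inv_tanh_sub_one_le_inv hsx
    _ = x⁻¹ * |y| := by field_simp

lemma abs_div_tanh_sub_div_tanh_le {s m x x' : ℝ} (hs : 0 < s) (hm : 0 < m) (hx : m ≤ x)
    (hx' : m ≤ x') (y : ℝ) :
    |s * y / tanh (s * x) - s * y / tanh (s * x')| ≤ |x - x'| / m ^ 2 * |y| := by
  calc |s * y / tanh (s * x) - s * y / tanh (s * x')|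
        = s * |y| * |(tanh (s * x))⁻¹ - (tanh (s * x'))⁻¹| := by
        rw [div_eq_mul_inv, div_eq_mul_inv, ← mul_sub, abs_mul, abs_mul, abs_of_pos hs]
    _ ≤ s * |y| * (|s * x - s * x'| / (s * m) ^ 2) := by
        gcongr
        exact abs_inv_tanh_sub_inv_tanh_le (mul_pos hs hm) (by gcongr) (by gcongr)
    _ = |x - x'| / m ^ 2 * |y| := by
        rw [← mul_sub, abs_mul, abs_of_pos hs]
        field_simp

end Real

lemma summable_sq_of_abs_sub_le {ι : Type*} {a b g : ι → ℝ} {C : ℝ}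
    (ha : Summable fun i => a i ^ 2) (hg : Summable fun i => g i ^ 2)
    (hab : ∀ i, |a i - b i| ≤ C * |g i|) : Summable fun i => b i ^ 2 := by
  refine .of_nonneg_of_le (fun i => sq_nonneg _) (fun i => ?_)
    ((ha.mul_left 2).add (hg.mul_left (2 * C ^ 2)))
  have hsq : (a i - b i) ^ 2 ≤ C ^ 2 * g i ^ 2 := by
    simpa only [sq_abs, mul_pow] using pow_le_pow_left₀ (abs_nonneg _) (hab i) 2
  nlinarith [sq_nonneg (a i + (a i - b i))]

namespace Orthonormal

variable {ι X : Type*} [NormedAddCommGroup X] [InnerProductSpace ℝ X] {e : ι → X}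

lemma norm_sum_smul_sq (he : Orthonormal ℝ e) (a : ι → ℝ) (s : Finset ι) :
    ‖∑ i ∈ s, a i • e i‖ ^ 2 = ∑ i ∈ s, a i ^ 2 := by
  simpa [LinearIsometry.toSpanSingleton_apply, norm_eq_abs, sq_abs] using
    he.orthogonalFamily.norm_sum a s

variable [CompleteSpace X]

lemma summable_smul (he : Orthonormal ℝ e) {a : ι → ℝ} (ha : Summable fun i => a i ^ 2) :
    Summable fun i => a i • e i := by
  simpa [LinearIsometry.toSpanSingleton_apply] using
    (he.orthogonalFamily.summable_iff_norm_sq_summable a).2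
      (by simpa [norm_eq_abs, sq_abs] using ha)

lemma norm_tsum_smul_sq (he : Orthonormal ℝ e) {a : ι → ℝ} (ha : Summable fun i => a i ^ 2) :
    ‖∑' i, a i • e i‖ ^ 2 = ∑' i, a i ^ 2 :=
  tendsto_nhds_unique
    (((he.summable_smul ha).hasSum.norm.pow 2).congr (he.norm_sum_smul_sq a))
    ha.hasSum

lemma norm_tsum_smul_sub_tsum_smul_le (he : Orthonormal ℝ e) {a b g : ι → ℝ} {C : ℝ}
    (ha : Summable fun i => a i ^ 2) (hg : Summable fun i => g i ^ 2) (hC : 0 ≤ C)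
    (hab : ∀ i, |a i - b i| ≤ C * |g i|) :
    ‖∑' i, a i • e i - ∑' i, b i • e i‖ ≤ C * √(∑' i, g i ^ 2) := by
  have hsq : ∀ i, (a i - b i) ^ 2 ≤ C ^ 2 * g i ^ 2 := fun i => by
    simpa only [sq_abs, mul_pow] using pow_le_pow_left₀ (abs_nonneg _) (hab i) 2
  have hsub : Summable fun i => (a i - b i) ^ 2 :=
    .of_nonneg_of_le (fun i => sq_nonneg _) hsq (hg.mul_left _)
  rw [← (he.summable_smul ha).tsum_sub (he.summable_smul (summable_sq_of_abs_sub_le ha hg hab))]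
  simp_rw [← sub_smul]
  rw [← sqrt_sq (norm_nonneg _), he.norm_tsum_smul_sq hsub, ← sqrt_sq hC,
    ← sqrt_mul (sq_nonneg C), ← tsum_mul_left]
  exact sqrt_le_sqrt (hsub.tsum_le_tsum hsq (hg.mul_left _))

end Orthonormal

theorem stmt_17_general (X : Type*) [NormedAddCommGroup X] [InnerProductSpace ℝ X]
    [CompleteSpace X]
    (e : ℕ → X) (he : Orthonormal ℝ e)
    (lamn : ℕ → ℝ) (hpos : ∀ n, 0 < lamn n)
    (gn : ℕ → ℝ)
    (hdecay : ∀ k : ℕ, Summable (fun n => lamn n ^ k * (gn n) ^ 2)) :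
    let JD : ℝ → X := fun h =>
      -∑' n, (Real.sqrt (lamn n) * gn n / Real.tanh (Real.sqrt (lamn n) * h)) • e n
    let JDinf : X := -∑' n, (Real.sqrt (lamn n) * gn n) • e n
    Tendsto JD atTop (nhds JDinf) ∧
    (∀ a b : ℝ, 0 < a → a ≤ b →
      ∃ C : ℝ, 0 ≤ C ∧ ∀ h ∈ Set.Icc a b, ∀ H ∈ Set.Icc a b,
        ‖JD h - JD H‖ ≤ C * |h - H|) := by
  intro JD JDinf
  have hs : ∀ n, 0 < √(lamn n) := fun n => sqrt_pos.2 (hpos n)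
  have hg : Summable fun n => gn n ^ 2 := by simpa using hdecay 0
  have hd : Summable fun n => (√(lamn n) * gn n) ^ 2 := by
    simpa [mul_pow, sq_sqrt (hpos _).le] using hdecay 1
  have hfar : ∀ h, 0 < h → ‖JD h - JDinf‖ ≤ h⁻¹ * √(∑' n, gn n ^ 2) := fun h hh => by
    rw [neg_sub_neg]
    exact he.norm_tsum_smul_sub_tsum_smul_le hd hg (inv_nonneg.2 hh.le)
      fun n => abs_sub_div_tanh_le (hs n) hh (gn n)
  refine ⟨?_, fun a _ ha _ => ⟨√(∑' n, gn n ^ 2) / a ^ 2, by positivity, fun h hh H hH => ?_⟩⟩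
  · rw [tendsto_iff_norm_sub_tendsto_zero]
    refine squeeze_zero' (.of_forall fun _ => norm_nonneg _)
      ((eventually_gt_atTop 0).mono hfar) ?_
    simpa using tendsto_inv_atTop_zero.mul_const √(∑' n, gn n ^ 2)
  · have hcH : Summable fun n => (√(lamn n) * gn n / tanh (√(lamn n) * H)) ^ 2 :=
      summable_sq_of_abs_sub_le hd hg fun n => abs_sub_div_tanh_le (hs n) (ha.trans_le hH.1) _
    calc ‖JD h - JD H‖ ≤ |H - h| / a ^ 2 * √(∑' n, gn n ^ 2) := by
          rw [neg_sub_neg]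
          exact he.norm_tsum_smul_sub_tsum_smul_le hcH hg (by positivity)
            fun n => abs_div_tanh_sub_div_tanh_le (hs n) ha hH.1 hh.1 (gn n)
      _ = √(∑' n, gn n ^ 2) / a ^ 2 * |h - H| := by rw [abs_sub_comm]; ring

/-- Convergence of the Dirichlet-to-Neumann operators: with eigenvalues `λ_n → ∞`,
orthonormal eigenfunctions `e_n` and rapidly decaying Fourier coefficients `g_n`,
`J_D^h[g] = −Σ √λ_n g_n e_n / tanh(√λ_n h)` converges in `L²(Γ)` to
`J_D^∞[g] = −Σ √λ_n g_n e_n` as `h → ∞`, and is Lipschitz in `h` uniformly on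
compact subsets of `(0,∞)`. -/
theorem stmt_17 (X : Type*) [NormedAddCommGroup X] [InnerProductSpace ℝ X]
    [CompleteSpace X]
    (e : ℕ → X) (he : Orthonormal ℝ e)
    (lamn : ℕ → ℝ) (hpos : ∀ n, 0 < lamn n) (hinf : Tendsto lamn atTop atTop)
    (gn : ℕ → ℝ)
    (hdecay : ∀ k : ℕ, Summable (fun n => lamn n ^ k * (gn n) ^ 2)) :
    let JD : ℝ → X := fun h =>
      -∑' n, (Real.sqrt (lamn n) * gn n / Real.tanh (Real.sqrt (lamn n) * h)) • e n
    let JDinf : X := -∑' n, (Real.sqrt (lamn n) * gn n) • e n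
    Tendsto JD atTop (nhds JDinf) ∧
    (∀ a b : ℝ, 0 < a → a ≤ b →
      ∃ C : ℝ, 0 ≤ C ∧ ∀ h ∈ Set.Icc a b, ∀ H ∈ Set.Icc a b,
        ‖JD h - JD H‖ ≤ C * |h - H|) :=
  stmt_17_general X e he lamn hpos gn hdecay
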